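/- arXiv:1202.1027 — 2 statements merged into one kernel-verified Lean document; each statement's English description precedes it below -/
import Mathlib

section
/- Define the algorithm's state evolution: ρ̂^k_0 = |ψ̃_0⟩⟨ψ̃_0| (a pure state), ρ^k_t = U_t ρ̂^k_t U_t†, and ρ̂^k_{t+1} = O^k_p(ρ^k_t), where U_0,...,U_T are unitaries on ℂ^{NM} and O^k_p is the p-faulty oracle. Define pure-state trackers: |ψ̂^k_0⟩ = |ψ̃_0⟩, |ψ^k_t⟩ = U_t|ψ̂^k_t⟩, write |ψ^k_t⟩ = Σ_i |i, α^k_{t,i}⟩, and |ψ̂^k_{t+1}⟩ = |ψ^k_t⟩ - 2(1-p)|k, α^k_{t,k}⟩. Then for every t ∈ {0,...,T} and k ∈ {1,...,N}, ρ^k_t = |ψ^k_t⟩⟨ψ^k_t| + R^k_t for some positive semidefinite matrix R^k_t. -/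
open Matrix ComplexOrder Finset

/-- Outer product `|v⟩⟨v|`. -/
noncomputable def outer {n : Type*} [Fintype n] (v : n → ℂ) : Matrix n n ℂ :=
  Matrix.vecMulVec v (star v)

/-- The perfect Grover oracle `Ô^k = (I - 2|k⟩⟨k|) ⊗ I`. -/
noncomputable def oracleHat {N M : ℕ} (k : Fin N) :
    Matrix (Fin N × Fin M) (Fin N × Fin M) ℂ :=
  Matrix.diagonal fun x => if x.1 = k then -1 else 1

/-- The `p`-faulty oracle channel `O^k_p(ρ) = (1-p)·Ô^k ρ Ô^{k†} + p·ρ`. -/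
noncomputable def faultyOracle {N M : ℕ} (p : ℝ) (k : Fin N)
    (ρ : Matrix (Fin N × Fin M) (Fin N × Fin M) ℂ) :
    Matrix (Fin N × Fin M) (Fin N × Fin M) ℂ :=
  ((1 - p : ℝ) : ℂ) • (oracleHat k * ρ * (oracleHat k)ᴴ) + (p : ℂ) • ρ

/-- Projection of a vector onto the subspace `|k⟩ ⊗ ℂ^M`, i.e. `|k, β_k⟩`. -/
def projVec {N M : ℕ} (k : Fin N) (v : Fin N × Fin M → ℂ) : Fin N × Fin M → ℂ :=
  fun x => if x.1 = k then v x else 0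

/-- The positive semidefinite square root of a positive semidefinite matrix
(the old Mathlib `Matrix.PosSemidef.sqrt`, since removed). -/
noncomputable def posSemidefSqrt {n : Type*} [Fintype n] [DecidableEq n]
    {A : Matrix n n ℂ} (hA : A.PosSemidef) : Matrix n n ℂ :=
  hA.1.eigenvectorUnitary.1 * diagonal ((↑) ∘ (√·) ∘ hA.1.eigenvalues) *
    (star hA.1.eigenvectorUnitary : Matrix n n ℂ)

/-- The trace norm (sum of singular values) of a complex matrix. -/
noncomputable def traceNorm {n : Type*} [Fintype n] [DecidableEq n]
    (A : Matrix n n ℂ) : ℝ :=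
  ((posSemidefSqrt (Matrix.posSemidef_conjTranspose_mul_self A)).trace).re

/-! On a pure state `|a⟩⟨a|` the faulty oracle returns the tracked pure state
`|a - 2(1-p) P_k a⟩⟨…|` plus the positive term `4p(1-p) |P_k a⟩⟨P_k a|`. Since the oracle and
conjugation by `U_t` are linear and preserve positivity, the excess `ρ - |ψ⟩⟨ψ|` stays positive
semidefinite at every step. -/

lemma outer_mulVec {n : Type*} [Fintype n] (A : Matrix n n ℂ) (v : n → ℂ) :
    outer (A *ᵥ v) = A * outer v * Aᴴ := by
  rw [outer, outer, star_mulVec, mul_vecMulVec, vecMulVec_mul]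

lemma posSemidef_ofReal_smul {n : Type*} [Fintype n] {c : ℝ} (hc : 0 ≤ c)
    {A : Matrix n n ℂ} (hA : A.PosSemidef) : ((c : ℂ) • A).PosSemidef :=
  hA.smul (Complex.zero_le_real.mpr hc)

lemma posSemidef_conj_sub_outer {n : Type*} [Fintype n] (A : Matrix n n ℂ)
    {ρ : Matrix n n ℂ} {v : n → ℂ} (h : (ρ - outer v).PosSemidef) :
    (A * ρ * Aᴴ - outer (A *ᵥ v)).PosSemidef := by
  rw [outer_mulVec, ← Matrix.sub_mul, ← Matrix.mul_sub]
  exact h.mul_mul_conjTranspose_same A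

section FaultyOracle

variable {N M : ℕ} {p : ℝ} (k : Fin N)

lemma faultyOracle_sub (A B : Matrix (Fin N × Fin M) (Fin N × Fin M) ℂ) :
    faultyOracle p k (A - B) = faultyOracle p k A - faultyOracle p k B := by
  simp only [faultyOracle, Matrix.mul_sub, Matrix.sub_mul, smul_sub]
  abel

lemma posSemidef_faultyOracle (hp0 : 0 ≤ p) (hp1 : p ≤ 1)
    {A : Matrix (Fin N × Fin M) (Fin N × Fin M) ℂ} (hA : A.PosSemidef) :
    (faultyOracle p k A).PosSemidef :=
  (posSemidef_ofReal_smul (sub_nonneg.mpr hp1) (hA.mul_mul_conjTranspose_same _)).add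
    (posSemidef_ofReal_smul hp0 hA)

lemma faultyOracle_outer (a : Fin N × Fin M → ℂ) :
    faultyOracle p k (outer a) =
      outer (a - ((2 * (1 - p) : ℝ) : ℂ) • projVec k a)
        + ((4 * p * (1 - p) : ℝ) : ℂ) • outer (projVec k a) := by
  ext i j
  by_cases hi : i.1 = k <;> by_cases hj : j.1 = k <;>
    simp only [faultyOracle, outer, oracleHat, projVec, diagonal_conjTranspose, mul_diagonal,
      diagonal_mul, Matrix.add_apply, Matrix.smul_apply, vecMulVec_apply, Pi.sub_apply,
      Pi.smul_apply, Pi.star_apply, hi, hj, ↓reduceIte, smul_eq_mul, star_sub, star_mul',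
      star_neg, star_one, star_zero, Complex.star_def, Complex.conj_ofReal] <;>
    push_cast <;> ring

lemma posSemidef_faultyOracle_sub_outer (hp0 : 0 ≤ p) (hp1 : p ≤ 1)
    {ρ : Matrix (Fin N × Fin M) (Fin N × Fin M) ℂ} {a : Fin N × Fin M → ℂ}
    (h : (ρ - outer a).PosSemidef) :
    (faultyOracle p k ρ - outer (a - ((2 * (1 - p) : ℝ) : ℂ) • projVec k a)).PosSemidef := by
  have hdecomp : faultyOracle p k ρ - outer (a - ((2 * (1 - p) : ℝ) : ℂ) • projVec k a) =
      faultyOracle p k (ρ - outer a) + ((4 * p * (1 - p) : ℝ) : ℂ) • outer (projVec k a) := by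
    rw [faultyOracle_sub, faultyOracle_outer]
    abel
  rw [hdecomp]
  exact (posSemidef_faultyOracle k hp0 hp1 h).add
    (posSemidef_ofReal_smul (by nlinarith) (posSemidef_vecMulVec_self_star _))

end FaultyOracle

theorem state_decomposition_general {N M T : ℕ} (p : ℝ) (hp0 : 0 < p) (hp1 : p < 1) (k : Fin N)
    (U : ℕ → Matrix (Fin N × Fin M) (Fin N × Fin M) ℂ)
    (ψ₀ : Fin N × Fin M → ℂ)
    (ρ ρhat : ℕ → Matrix (Fin N × Fin M) (Fin N × Fin M) ℂ)
    (ψ ψhat : ℕ → Fin N × Fin M → ℂ)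
    (hρhat0 : ρhat 0 = outer ψ₀)
    (hρ : ∀ t, ρ t = U t * ρhat t * (U t)ᴴ)
    (hρhatS : ∀ t, ρhat (t + 1) = faultyOracle p k (ρ t))
    (hψhat0 : ψhat 0 = ψ₀)
    (hψ : ∀ t, ψ t = (U t).mulVec (ψhat t))
    (hψhatS : ∀ t, ψhat (t + 1) = ψ t - ((2 * (1 - p) : ℝ) : ℂ) • projVec k (ψ t)) :
    ∀ t ≤ T, ∃ R : Matrix (Fin N × Fin M) (Fin N × Fin M) ℂ,
      R.PosSemidef ∧ ρ t = outer (ψ t) + R := by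
  have hρhat_excess : ∀ t, (ρhat t - outer (ψhat t)).PosSemidef := by
    intro t
    induction t with
    | zero =>
      rw [hρhat0, hψhat0, sub_self]
      exact PosSemidef.zero
    | succ t ih =>
      rw [hρhatS, hψhatS, hρ, hψ]
      exact posSemidef_faultyOracle_sub_outer k hp0.le hp1.le (posSemidef_conj_sub_outer _ ih)
  intro t _
  refine ⟨ρ t - outer (ψ t), ?_, (add_sub_cancel _ _).symm⟩
  rw [hρ, hψ]
  exact posSemidef_conj_sub_outer _ (hρhat_excess t)

/-- State-decomposition lemma (Lemma 3.2): the mixed state of the algorithm is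
the pure-state tracker plus a positive semidefinite residue. -/
theorem state_decomposition {N M T : ℕ} (p : ℝ) (hp0 : 0 < p) (hp1 : p < 1) (k : Fin N)
    (U : ℕ → Matrix (Fin N × Fin M) (Fin N × Fin M) ℂ)
    (hU : ∀ t, U t ∈ Matrix.unitaryGroup (Fin N × Fin M) ℂ)
    (ψ₀ : Fin N × Fin M → ℂ) (hψ₀ : ∑ x, ‖ψ₀ x‖ ^ 2 = 1)
    (ρ ρhat : ℕ → Matrix (Fin N × Fin M) (Fin N × Fin M) ℂ)
    (ψ ψhat : ℕ → Fin N × Fin M → ℂ)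
    (hρhat0 : ρhat 0 = outer ψ₀)
    (hρ : ∀ t, ρ t = U t * ρhat t * (U t)ᴴ)
    (hρhatS : ∀ t, ρhat (t + 1) = faultyOracle p k (ρ t))
    (hψhat0 : ψhat 0 = ψ₀)
    (hψ : ∀ t, ψ t = (U t).mulVec (ψhat t))
    (hψhatS : ∀ t, ψhat (t + 1) = ψ t - ((2 * (1 - p) : ℝ) : ℂ) • projVec k (ψ t)) :
    ∀ t ≤ T, ∃ R : Matrix (Fin N × Fin M) (Fin N × Fin M) ℂ,
      R.PosSemidef ∧ ρ t = outer (ψ t) + R :=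
  state_decomposition_general p hp0 hp1 k U ψ₀ ρ ρhat ψ ψhat hρhat0 hρ hρhatS hψhat0 hψ hψhatS
end

section
/- Progress increase bound: with the pure-state trackers as above, define H^k_t = ‖|ψ^0_t⟩ - |ψ^k_t⟩‖². Then for all k ∈ {1,...,N} and 0 ≤ t < T, H^k_{t+1} - H^k_t ≤ ((1-p)/p)·‖α^0_{t,k}‖², where α^0_{t,k} ∈ ℂ^M is the k-th component of |ψ^0_t⟩ (the evolution with the null oracle, for which |ψ̂^0_{t+1}⟩ = |ψ^0_t⟩). -/
open Matrix ComplexOrder Finset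

/-!
The null-oracle and `k`-oracle trackers are propagated by the same unitary, which preserves the
norm of their difference, so the increment of `H^k` comes only from the oracle term
`-2(1-p)|k, α^k_{t,k}⟩`, which touches only the `k`-block. On that block, with `α = α^0_{t,k}` and
`β = α^k_{t,k}`, the increment equals `4(1-p)(⟪α, β⟫ - p‖β‖²)`, and `‖α - 2pβ‖² ≥ 0` bounds
`4p(⟪α, β⟫ - p‖β‖²)` by `‖α‖²`.
-/

theorem ofReal_sum_norm_sq_eq_star_dotProduct {𝕜 n : Type*} [RCLike 𝕜] [Fintype n] (w : n → 𝕜) :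
    ((∑ x, ‖w x‖ ^ 2 : ℝ) : 𝕜) = star w ⬝ᵥ w := by
  simp [dotProduct, RCLike.conj_mul]

theorem sum_norm_sq_mulVec_of_mem_unitaryGroup {𝕜 n : Type*} [RCLike 𝕜] [Fintype n]
    [DecidableEq n] {U : Matrix n n 𝕜} (hU : U ∈ unitaryGroup n 𝕜) (w : n → 𝕜) :
    ∑ x, ‖(U *ᵥ w) x‖ ^ 2 = ∑ x, ‖w x‖ ^ 2 := by
  apply RCLike.ofReal_injective (K := 𝕜)
  rw [ofReal_sum_norm_sq_eq_star_dotProduct, ofReal_sum_norm_sq_eq_star_dotProduct, star_mulVec,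
    dotProduct_mulVec, vecMul_vecMul, ← star_eq_conjTranspose, mem_unitaryGroup_iff'.mp hU,
    vecMul_one]

theorem norm_sub_add_smul_sq_sub_norm_sub_sq_le {E : Type*} [NormedAddCommGroup E]
    [InnerProductSpace ℝ E] {p : ℝ} (hp0 : 0 < p) (hp1 : p ≤ 1) (α β : E) :
    ‖α - β + (2 * (1 - p)) • β‖ ^ 2 - ‖α - β‖ ^ 2 ≤ (1 - p) / p * ‖α‖ ^ 2 := by
  have hexp : ‖α - β + (2 * (1 - p)) • β‖ ^ 2 - ‖α - β‖ ^ 2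
      = 4 * (1 - p) * (inner ℝ α β - p * ‖β‖ ^ 2) := by
    rw [norm_add_sq_real, norm_smul, inner_smul_right, inner_sub_left, real_inner_self_eq_norm_sq,
      Real.norm_eq_abs, abs_of_nonneg (by linarith : 0 ≤ 2 * (1 - p))]
    ring
  have hamgm : 4 * p * (inner ℝ α β - p * ‖β‖ ^ 2) ≤ ‖α‖ ^ 2 := by
    have hsq := norm_sub_sq_real α ((2 * p) • β)
    rw [norm_smul, inner_smul_right, Real.norm_eq_abs, abs_of_pos (by linarith : 0 < 2 * p)] at hsq
    nlinarith [sq_nonneg ‖α - (2 * p) • β‖]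
  rw [hexp, div_mul_eq_mul_div, le_div_iff₀ hp0]
  nlinarith [mul_le_mul_of_nonneg_left hamgm (sub_nonneg.mpr hp1)]

theorem sum_ite_fst_eq {α β R : Type*} [Fintype α] [Fintype β] [DecidableEq α]
    [AddCommMonoid R] (a : α) (f : α × β → R) :
    ∑ x : α × β, (if x.1 = a then f x else 0) = ∑ b, f (a, b) := by
  rw [Fintype.sum_prod_type, Fintype.sum_eq_single a fun i hi => by simp [hi]]
  simp

theorem sum_norm_sq_sub_sub_smul_projVec_sub_le {N M : ℕ} {p : ℝ} (hp0 : 0 < p) (hp1 : p ≤ 1)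
    (k : Fin N) (a b : Fin N × Fin M → ℂ) :
    ∑ x, ‖(a - (b - ((2 * (1 - p) : ℝ) : ℂ) • projVec k b)) x‖ ^ 2 - ∑ x, ‖(a - b) x‖ ^ 2
      ≤ (1 - p) / p * ∑ j, ‖a (k, j)‖ ^ 2 := by
  rw [← sum_sub_distrib, mul_sum, ← sum_ite_fst_eq k fun x => (1 - p) / p * ‖a x‖ ^ 2]
  refine sum_le_sum fun x _ => ?_
  by_cases hx : x.1 = k
  · have h := norm_sub_add_smul_sq_sub_norm_sub_sq_le hp0 hp1 (a x) (b x)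
    simp only [Pi.sub_apply, Pi.smul_apply, projVec, hx, if_true, Complex.real_smul] at h ⊢
    rwa [sub_sub_eq_add_sub, add_sub_right_comm]
  · simp [projVec, hx]

theorem progress_increase_general {N M : ℕ} (p : ℝ) (hp0 : 0 < p) (hp1 : p < 1) (k : Fin N)
    (U : ℕ → Matrix (Fin N × Fin M) (Fin N × Fin M) ℂ)
    (hU : ∀ t, U t ∈ Matrix.unitaryGroup (Fin N × Fin M) ℂ)
    (ψ₀ ψk : ℕ → Fin N × Fin M → ℂ)
    (hψ₀S : ∀ t, ψ₀ (t + 1) = (U (t + 1)).mulVec (ψ₀ t))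
    (hψkS : ∀ t, ψk (t + 1) =
      (U (t + 1)).mulVec (ψk t - ((2 * (1 - p) : ℝ) : ℂ) • projVec k (ψk t)))
    (t : ℕ) :
    (∑ x, ‖ψ₀ (t + 1) x - ψk (t + 1) x‖ ^ 2) - (∑ x, ‖ψ₀ t x - ψk t x‖ ^ 2)
      ≤ ((1 - p) / p) * ∑ b, ‖ψ₀ t (k, b)‖ ^ 2 := by
  set v := ψ₀ t - (ψk t - ((2 * (1 - p) : ℝ) : ℂ) • projVec k (ψk t))
  have hdiff : ψ₀ (t + 1) - ψk (t + 1) = U (t + 1) *ᵥ v := by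
    rw [hψ₀S, hψkS, ← mulVec_sub]
  calc (∑ x, ‖ψ₀ (t + 1) x - ψk (t + 1) x‖ ^ 2) - (∑ x, ‖ψ₀ t x - ψk t x‖ ^ 2)
      = ∑ x, ‖(U (t + 1) *ᵥ v) x‖ ^ 2 - ∑ x, ‖(ψ₀ t - ψk t) x‖ ^ 2 := by rw [← hdiff]; rfl
    _ = ∑ x, ‖v x‖ ^ 2 - ∑ x, ‖(ψ₀ t - ψk t) x‖ ^ 2 := by
        rw [sum_norm_sq_mulVec_of_mem_unitaryGroup (hU (t + 1))]
    _ ≤ (1 - p) / p * ∑ b, ‖ψ₀ t (k, b)‖ ^ 2 :=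
        sum_norm_sq_sub_sub_smul_projVec_sub_le hp0 hp1.le k (ψ₀ t) (ψk t)

/-- Progress-increase bound (Lemma 3.5):
`H^k_{t+1} - H^k_t ≤ ((1-p)/p)·‖α⁰_{t,k}‖²`. -/
theorem progress_increase {N M T : ℕ} (p : ℝ) (hp0 : 0 < p) (hp1 : p < 1) (k : Fin N)
    (U : ℕ → Matrix (Fin N × Fin M) (Fin N × Fin M) ℂ)
    (hU : ∀ t, U t ∈ Matrix.unitaryGroup (Fin N × Fin M) ℂ)
    (ψ₀ ψk : ℕ → Fin N × Fin M → ℂ)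
    (hψ₀S : ∀ t, ψ₀ (t + 1) = (U (t + 1)).mulVec (ψ₀ t))
    (hψkS : ∀ t, ψk (t + 1) =
      (U (t + 1)).mulVec (ψk t - ((2 * (1 - p) : ℝ) : ℂ) • projVec k (ψk t)))
    (t : ℕ) (ht : t < T) :
    (∑ x, ‖ψ₀ (t + 1) x - ψk (t + 1) x‖ ^ 2) - (∑ x, ‖ψ₀ t x - ψk t x‖ ^ 2)
      ≤ ((1 - p) / p) * ∑ b, ‖ψ₀ t (k, b)‖ ^ 2 :=
  progress_increase_general p hp0 hp1 k U hU ψ₀ ψk hψ₀S hψkS t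
end
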